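/- Let G be a prime graph with at least 4 vertices, let A be a fully closed set, and let v ∈ A. If G∖v is 2^{+1}-rank-connected but not prime, then there exists X ⊆ A−{v} with |X| = 2 and ρ_{G∖v}(X) ≤ 1. -/

import Mathlib

open Finset

variable {V : Type} [Fintype V] [DecidableEq V]

open scoped Classical

/-- The rank over GF(2) of the `X × Y` submatrix of the adjacency matrix of `G`. -/
noncomputable def cutRankOn (G : SimpleGraph V) (X Y : Finset V) : ℕ :=
  (Matrix.of (fun (i : ↥X) (j : ↥Y) => if G.Adj i.1 j.1 then (1 : ZMod 2) else 0)).rank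

/-- The cut-rank of `X` in the graph `G` restricted to the vertex set `S`:
the rank over GF(2) of the `X × (S \ X)` submatrix of the adjacency matrix. -/
noncomputable def cutRank (G : SimpleGraph V) (S X : Finset V) : ℕ :=
  cutRankOn G X (S \ X)

/-- `A` gives a split of the graph `G` restricted to the vertex set `S`. -/
def IsSplit (G : SimpleGraph V) (S A : Finset V) : Prop :=
  A ⊆ S ∧ cutRank G S A ≤ 1 ∧ 2 ≤ A.card ∧ 2 ≤ (S \ A).card

/-- The graph `G` restricted to the vertex set `S` is prime: connected and with no split. -/
def IsPrime (G : SimpleGraph V) (S : Finset V) : Prop :=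
  (G.induce (↑S : Set V)).Connected ∧ ∀ A, ¬ IsSplit G S A

/-- `G` restricted to `S` is `k⁺ˡ`-rank-connected. -/
def RankConn (G : SimpleGraph V) (S : Finset V) (k l : ℤ) : Prop :=
  ∀ X ⊆ S, (cutRank G S X : ℤ) < k →
    min (X.card : ℤ) (((S \ X).card : ℤ)) < k + l

/-- `G` restricted to `S` is `k`-rank-connected. -/
def RankConnAll (G : SimpleGraph V) (S : Finset V) (k : ℤ) : Prop :=
  ∀ m : ℤ, m ≤ k → RankConn G S m 0

def SideA (G : SimpleGraph V) (v w x : V) : Prop := G.Adj v x ∧ ¬ G.Adj w x ∧ x ≠ w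
def SideB (G : SimpleGraph V) (v w x : V) : Prop := G.Adj w x ∧ ¬ G.Adj v x ∧ x ≠ v
def SideC (G : SimpleGraph V) (v w x : V) : Prop := G.Adj v x ∧ G.Adj w x

/-- `x` and `y` lie in different ones among the three sets
`N(v)−N(w)−{w}`, `N(w)−N(v)−{v}`, `N(v)∩N(w)`. -/
def PivotToggle (G : SimpleGraph V) (v w x y : V) : Prop :=
  (SideA G v w x ∧ SideB G v w y) ∨ (SideB G v w x ∧ SideA G v w y) ∨
  (SideA G v w x ∧ SideC G v w y) ∨ (SideC G v w x ∧ SideA G v w y) ∨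
  (SideB G v w x ∧ SideC G v w y) ∨ (SideC G v w x ∧ SideB G v w y)

set_option linter.unusedSectionVars false in
lemma pivotToggle_symm {G : SimpleGraph V} {v w x y : V}
    (h : PivotToggle G v w x y) : PivotToggle G v w y x := by
  unfold PivotToggle at h ⊢; tauto

/-- The graph `G ∧ vw` obtained by pivoting the edge `vw`: toggle adjacency across the
three sets and swap the labels of `v` and `w`. -/
def pivot (G : SimpleGraph V) (v w : V) : SimpleGraph V where
  Adj a b := a ≠ b ∧
    Xor' (G.Adj (Equiv.swap v w a) (Equiv.swap v w b))
         (PivotToggle G v w (Equiv.swap v w a) (Equiv.swap v w b))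
  symm := by
    constructor
    intro a b h
    obtain ⟨hne, hx⟩ := h
    refine ⟨hne.symm, ?_⟩
    have hA : G.Adj (Equiv.swap v w b) (Equiv.swap v w a) ↔
        G.Adj (Equiv.swap v w a) (Equiv.swap v w b) := SimpleGraph.adj_comm _ _ _
    have hT : PivotToggle G v w (Equiv.swap v w b) (Equiv.swap v w a) ↔
        PivotToggle G v w (Equiv.swap v w a) (Equiv.swap v w b) :=
      ⟨pivotToggle_symm, pivotToggle_symm⟩
    rw [hA, hT]
    exact hx
  loopless := by constructor; intro a h; exact h.1 rfl

/-- One pivot step along an edge. -/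
def PivotStep (G H : SimpleGraph V) : Prop := ∃ v w, G.Adj v w ∧ H = pivot G v w

/-- Pivot-equivalence: a sequence of pivots. -/
def PivotEquiv : SimpleGraph V → SimpleGraph V → Prop := Relation.ReflTransGen PivotStep

/-- `A` is a fully closed set of `G` restricted to `S`. -/
def FullyClosed (G : SimpleGraph V) (S A : Finset V) : Prop :=
  A ⊆ S ∧ cutRank G S A = 2 ∧ 2 < A.card ∧
    ∀ u ∈ S, u ∉ A → cutRank G S A < cutRank G S (insert u A)

/-- `{a,b,c}` is a triplet of `G` (on vertex set `univ`). -/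
def Triplet (G : SimpleGraph V) (a b c : V) : Prop :=
  cutRank G Finset.univ {a, b, c} = 2 ∧
  ∀ x ∈ ({a, b, c} : Finset V),
    cutRank G (Finset.univ \ {x}) (({a, b, c} : Finset V) \ {x}) = 2

/-- `B` is a `k`-branched set of `G` restricted to `S`. -/
inductive KBranched (G : SimpleGraph V) (S : Finset V) (k : ℕ) : Finset V → Prop
  | single (v : V) (hv : v ∈ S) (h : cutRank G S {v} ≤ k) : KBranched G S k {v}
  | split (B B' : Finset V) (hB : B ⊆ S) (h : cutRank G S B ≤ k)
      (h1 : B' ⊆ B) (h2 : B'.Nonempty) (h3 : B' ≠ B)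
      (hb1 : KBranched G S k B') (hb2 : KBranched G S k (B \ B')) : KBranched G S k B

/-- The rank-width of `G` restricted to `S`: the least `k` such that `S` is `k`-branched
(equivalently, the minimum width of a rank-decomposition). -/
noncomputable def rankWidth (G : SimpleGraph V) (S : Finset V) : ℕ :=
  sInf {k | S = ∅ ∨ KBranched G S k S}

/-- `A` is a titanic set of `G` restricted to `S`. -/
def Titanic (G : SimpleGraph V) (S A : Finset V) : Prop :=
  ∀ A1 A2 A3 : Finset V, A1 ∪ A2 ∪ A3 = A →
    Disjoint A1 A2 → Disjoint A1 A3 → Disjoint A2 A3 →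
    cutRank G S A ≤ cutRank G S A1 ∨ cutRank G S A ≤ cutRank G S A2 ∨
      cutRank G S A ≤ cutRank G S A3

/-!
Since `G \ v` is not prime but `2⁺¹`-rank-connected, it has a pair `{x, y}` of cut-rank at most
one: the small side of a split, or an isolated vertex with any other vertex. Primeness of `G`
makes the rows of `x` and `y` independent once column `v` is restored, so some combination of
them vanishes outside `v`. If `x, y ∈ A` we are done. If exactly one lies in `A`, the other could
be added to `A` without raising its cut-rank (or `G` would have a pendant vertex), contradicting
full closure. If neither does, restricting that combination to `A` shows that column `v`
carries one of the two units of `ρ(A)`, so `ρ_{G\v}(A - v) ≤ 1`, and rank-connectivity gives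
`|A - v| = 2`.
-/

set_option linter.unusedSectionVars false

lemma mem_span_singleton_of_finrank_span_pair_le_one {K M : Type*} [Field K] [AddCommGroup M]
    [Module K M] {a b : M} (h : Module.finrank K (Submodule.span K {a, b}) ≤ 1) (hb : b ≠ 0) :
    a ∈ K ∙ b := by
  have hle : K ∙ b ≤ Submodule.span K {a, b} := Submodule.span_mono (by simp)
  have : FiniteDimensional K (Submodule.span K {a, b}) :=
    FiniteDimensional.span_of_finite K (Set.toFinite _)
  rw [Submodule.eq_of_le_of_finrank_le hle (by rwa [finrank_span_singleton hb])]
  exact Submodule.subset_span (by simp)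

section CutRankOn

variable {G : SimpleGraph V}

noncomputable def adjRow (G : SimpleGraph V) (Y : Finset V) (x : V) : ↥Y → ZMod 2 :=
  fun j => if G.Adj x j then 1 else 0

noncomputable def rowSpan (G : SimpleGraph V) (X Y : Finset V) :
    Submodule (ZMod 2) (↥Y → ZMod 2) :=
  Submodule.span (ZMod 2) (adjRow G Y '' X)

noncomputable def restrictCols {Y' Y : Finset V} (h : Y' ⊆ Y) :
    (↥Y → ZMod 2) →ₗ[ZMod 2] (↥Y' → ZMod 2) :=
  LinearMap.funLeft (ZMod 2) (ZMod 2) fun j => ⟨j.1, h j.2⟩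

lemma adjRow_eq_zero_iff {Y : Finset V} {x : V} :
    adjRow G Y x = 0 ↔ ∀ j ∈ Y, ¬ G.Adj x j := by
  simp [funext_iff, adjRow]

lemma adjRow_mem_rowSpan {X Y : Finset V} {x : V} (hx : x ∈ X) : adjRow G Y x ∈ rowSpan G X Y :=
  Submodule.subset_span ⟨x, hx, rfl⟩

lemma restrictCols_adjRow {Y' Y : Finset V} (h : Y' ⊆ Y) (x : V) :
    restrictCols h (adjRow G Y x) = adjRow G Y' x := rfl

lemma map_restrictCols_rowSpan (X : Finset V) {Y' Y : Finset V} (h : Y' ⊆ Y) :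
    (rowSpan G X Y).map (restrictCols h) = rowSpan G X Y' := by
  rw [rowSpan, Submodule.map_span, ← Set.image_comp]
  rfl

lemma cutRankOn_eq_finrank_rowSpan (X Y : Finset V) :
    cutRankOn G X Y = Module.finrank (ZMod 2) (rowSpan G X Y) := by
  rw [cutRankOn, Matrix.rank_eq_finrank_span_row, rowSpan,
    ← Subtype.range_coe (s := (X : Set V)), ← Set.range_comp]
  rfl

lemma cutRankOn_comm (X Y : Finset V) : cutRankOn G X Y = cutRankOn G Y X := by
  rw [cutRankOn, cutRankOn, ← Matrix.rank_transpose]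
  congr 1
  ext j i
  exact if_congr (G.adj_comm _ _) rfl rfl

lemma cutRankOn_add_finrank_ker (X : Finset V) {Y' Y : Finset V} (h : Y' ⊆ Y) :
    cutRankOn G X Y' + Module.finrank (ZMod 2) (LinearMap.ker ((restrictCols h).domRestrict
      (rowSpan G X Y))) = cutRankOn G X Y := by
  rw [cutRankOn_eq_finrank_rowSpan, cutRankOn_eq_finrank_rowSpan, ← map_restrictCols_rowSpan X h,
    ← LinearMap.range_domRestrict]
  exact LinearMap.finrank_range_add_finrank_ker _

lemma cutRankOn_mono_right (X : Finset V) {Y' Y : Finset V} (h : Y' ⊆ Y) :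
    cutRankOn G X Y' ≤ cutRankOn G X Y :=
  (cutRankOn_add_finrank_ker X h) ▸ Nat.le_add_right _ _

lemma cutRankOn_add_one_le_of_restrictCols_eq_zero {X Y' Y : Finset V} (h : Y' ⊆ Y)
    {z : ↥Y → ZMod 2} (hz : z ∈ rowSpan G X Y) (hz0 : z ≠ 0) (hzY' : restrictCols h z = 0) :
    cutRankOn G X Y' + 1 ≤ cutRankOn G X Y := by
  rw [← cutRankOn_add_finrank_ker X h]
  have : Nontrivial (LinearMap.ker ((restrictCols h).domRestrict (rowSpan G X Y))) :=
    ⟨⟨⟨⟨z, hz⟩, hzY'⟩, 0, fun h0 => hz0 (congrArg (fun w => w.1.1) h0)⟩⟩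
  have := Module.finrank_pos (R := ZMod 2)
    (M := LinearMap.ker ((restrictCols h).domRestrict (rowSpan G X Y)))
  omega

lemma exists_restrictCols_eq_zero_of_cutRankOn_lt {X Y' Y : Finset V} (h : Y' ⊆ Y)
    (hlt : cutRankOn G X Y' < cutRankOn G X Y) :
    ∃ z ∈ rowSpan G X Y, z ≠ 0 ∧ restrictCols h z = 0 := by
  rw [← cutRankOn_add_finrank_ker X h, lt_add_iff_pos_right,
    Module.finrank_pos_iff_exists_ne_zero] at hlt
  obtain ⟨⟨⟨z, hz⟩, hker⟩, hne⟩ := hlt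
  exact ⟨z, hz, fun h0 => hne (by simp [h0]), hker⟩

lemma cutRankOn_le_card_left (X Y : Finset V) : cutRankOn G X Y ≤ X.card := by
  rw [cutRankOn_eq_finrank_rowSpan, rowSpan, ← Finset.coe_image]
  exact (finrank_span_finset_le_card _).trans Finset.card_image_le

lemma cutRankOn_le_card_right (X Y : Finset V) : cutRankOn G X Y ≤ Y.card :=
  cutRankOn_comm X Y ▸ cutRankOn_le_card_left Y X

lemma cutRankOn_insert_le (x : V) (X Y : Finset V) :
    cutRankOn G (insert x X) Y ≤ cutRankOn G X Y + 1 := by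
  rw [cutRankOn_eq_finrank_rowSpan, cutRankOn_eq_finrank_rowSpan, rowSpan, rowSpan, coe_insert,
    Set.image_insert_eq, Submodule.span_insert]
  have := Submodule.finrank_add_le_finrank_add_finrank (ZMod 2 ∙ adjRow G Y x)
    (Submodule.span (ZMod 2) (adjRow G Y '' X))
  have : Module.finrank (ZMod 2) (ZMod 2 ∙ adjRow G Y x) ≤ 1 := by
    simpa using finrank_span_le_card (R := ZMod 2) ({adjRow G Y x} : Set (↥Y → ZMod 2))
  omega

lemma cutRankOn_insert_of_mem_rowSpan {x : V} {X Y : Finset V}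
    (hx : adjRow G Y x ∈ rowSpan G X Y) :
    cutRankOn G (insert x X) Y = cutRankOn G X Y := by
  rw [cutRankOn_eq_finrank_rowSpan, cutRankOn_eq_finrank_rowSpan, rowSpan, rowSpan, coe_insert,
    Set.image_insert_eq, Submodule.span_insert_eq_span hx]

lemma cutRankOn_eq_zero_of_forall_not_adj {X Y : Finset V}
    (h : ∀ i ∈ X, ∀ j ∈ Y, ¬ G.Adj i j) :
    cutRankOn G X Y = 0 := by
  rw [cutRankOn_eq_finrank_rowSpan, rowSpan, Submodule.span_eq_bot.mpr, finrank_bot]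
  rintro _ ⟨i, hi, rfl⟩
  exact adjRow_eq_zero_iff.mpr (h i hi)

end CutRankOn

section CutRank

variable {G : SimpleGraph V} {S X : Finset V}

lemma cutRank_sdiff (hX : X ⊆ S) : cutRank G S (S \ X) = cutRank G S X := by
  rw [cutRank, cutRank, Finset.sdiff_sdiff_eq_self hX, cutRankOn_comm]

lemma cutRank_insert_le (x : V) : cutRank G S (insert x X) ≤ cutRank G S X + 1 :=
  (cutRankOn_mono_right _ (sdiff_subset_sdiff subset_rfl (subset_insert x X))).trans
    (cutRankOn_insert_le x X _)

lemma RankConn.card_le_two (hconn : RankConn G S 2 1) (hX : X ⊆ S) (hρ : cutRank G S X ≤ 1) :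
    X.card ≤ 2 ∨ (S \ X).card ≤ 2 := by
  have := hconn X hX (by omega)
  omega

lemma exists_cutRank_eq_zero_of_not_connected (hS : S.Nonempty)
    (h : ¬ (G.induce (S : Set V)).Connected) :
    ∃ W ⊆ S, W.Nonempty ∧ (S \ W).Nonempty ∧ cutRank G S W = 0 := by
  obtain ⟨s, hs⟩ := hS
  have : Nonempty (S : Set V) := ⟨⟨s, hs⟩⟩
  obtain ⟨a, b, hab⟩ : ∃ a b : (S : Set V), ¬ (G.induce (S : Set V)).Reachable a b := by
    simpa [SimpleGraph.connected_iff, SimpleGraph.Preconnected, this] using h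
  set W := S.filter fun c => ∃ hc : c ∈ S, (G.induce (S : Set V)).Reachable a ⟨c, hc⟩
  refine ⟨W, filter_subset _ _, ⟨a, mem_filter.mpr ⟨a.2, a.2, .rfl⟩⟩,
    ⟨b, mem_sdiff.mpr ⟨b.2, fun hb => hab (mem_filter.mp hb).2.2⟩⟩, ?_⟩
  refine cutRankOn_eq_zero_of_forall_not_adj fun i hi j hj hij => (mem_sdiff.mp hj).2 ?_
  obtain ⟨-, hiS, hai⟩ := mem_filter.mp hi
  have hjS := (mem_sdiff.mp hj).1
  exact mem_filter.mpr ⟨hjS, hjS,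
    SimpleGraph.Reachable.trans hai (SimpleGraph.Adj.reachable (G := G.induce (S : Set V))
      (u := ⟨i, hiS⟩) (v := ⟨j, hjS⟩) hij)⟩

lemma RankConn.exists_pair_cutRank_le_one (hconn : RankConn G S 2 1) (hX : X ⊆ S)
    (hρ : cutRank G S X ≤ 1) (hX₁ : cutRank G S X < X.card)
    (hX₂ : cutRank G S X < (S \ X).card) :
    ∃ P ⊆ S, P.card = 2 ∧ cutRank G S P ≤ 1 := by
  wlog hsmall : X.card ≤ 2 generalizing X
  · have hX' : (S \ X).card ≤ 2 := (hconn.card_le_two hX hρ).resolve_left hsmall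
    refine this sdiff_subset ?_ ?_ ?_ hX' <;> rw [cutRank_sdiff hX]
    · exact hρ
    · exact hX₂
    · rwa [Finset.sdiff_sdiff_eq_self hX]
  obtain hcard | hcard : X.card = 2 ∨ X.card = 1 := by omega
  · exact ⟨X, hX, hcard, hρ⟩
  · obtain ⟨d, hd⟩ := card_pos.mp (by omega : 0 < (S \ X).card)
    refine ⟨insert d X, insert_subset (mem_sdiff.mp hd).1 hX, ?_, ?_⟩
    · rw [card_insert_of_notMem (mem_sdiff.mp hd).2, hcard]
    · have := cutRank_insert_le (G := G) (S := S) (X := X) d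
      omega

lemma RankConn.exists_pair_cutRank_le_one_of_not_isPrime (hconn : RankConn G S 2 1)
    (hnp : ¬ IsPrime G S) (hS : S.Nonempty) :
    ∃ P ⊆ S, P.card = 2 ∧ cutRank G S P ≤ 1 := by
  by_cases hc : (G.induce (S : Set V)).Connected
  · obtain ⟨W, hWS, hρ, hW₁, hW₂⟩ : ∃ W, IsSplit G S W := by
      simpa [IsPrime, hc] using hnp
    exact hconn.exists_pair_cutRank_le_one hWS hρ (by omega) (by omega)
  · obtain ⟨W, hWS, hW₁, hW₂, hρ⟩ := exists_cutRank_eq_zero_of_not_connected hS hc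
    exact hconn.exists_pair_cutRank_le_one hWS (by omega) (by rw [hρ]; exact card_pos.mpr hW₁)
      (by rw [hρ]; exact card_pos.mpr hW₂)

end CutRank

section FullyClosed

variable {G : SimpleGraph V} {A : Finset V} {v x y : V}

lemma IsPrime.two_le_cutRankOn_pair (hcard : 4 ≤ Fintype.card V) (hG : IsPrime G univ)
    (hxy : x ≠ y) : 2 ≤ cutRankOn G {x, y} (univ \ {x, y}) := by
  by_contra! h
  refine hG.2 {x, y} ⟨subset_univ _, Nat.le_of_lt_succ h, (card_pair hxy).ge, ?_⟩
  rw [card_sdiff_of_subset (subset_univ _), card_univ, card_pair hxy]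
  omega

lemma FullyClosed.cutRankOn_eq_two (hA : FullyClosed G univ A) :
    cutRankOn G A (univ \ A) = 2 :=
  hA.2.1

lemma FullyClosed.three_le_cutRankOn_insert (hA : FullyClosed G univ A) (hx : x ∉ A) :
    3 ≤ cutRankOn G (insert x A) (univ \ insert x A) := by
  have := hA.2.2.2 x (mem_univ x) hx
  rwa [hA.2.1] at this

lemma FullyClosed.two_le_cutRankOn_sdiff_insert (hA : FullyClosed G univ A) (hx : x ∉ A) :
    2 ≤ cutRankOn G A (univ \ insert x A) := by
  have := hA.three_le_cutRankOn_insert hx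
  have := cutRankOn_insert_le (G := G) x A (univ \ insert x A)
  omega

lemma FullyClosed.adjRow_notMem_rowSpan (hA : FullyClosed G univ A) (hx : x ∉ A) :
    adjRow G (univ \ insert x A) x ∉ rowSpan G A (univ \ insert x A) := by
  intro hmem
  have h3 := hA.three_le_cutRankOn_insert hx
  rw [cutRankOn_insert_of_mem_rowSpan hmem] at h3
  have := cutRankOn_mono_right (G := G) A
    (sdiff_subset_sdiff (subset_refl univ) (subset_insert x A))
  have := hA.cutRankOn_eq_two
  omega

lemma FullyClosed.four_le_card_compl (hA : FullyClosed G univ A) : 4 ≤ (univ \ A).card := by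
  obtain ⟨x, hx⟩ : (univ \ A).Nonempty := by
    have := cutRankOn_le_card_right (G := G) A (univ \ A)
    have := hA.cutRankOn_eq_two
    rw [← card_pos]
    omega
  have h3 := hA.three_le_cutRankOn_insert (mem_sdiff.mp hx).2
  have hle := cutRankOn_le_card_right (G := G) (insert x A) (univ \ insert x A)
  rw [sdiff_insert] at h3 hle
  rw [card_erase_of_mem hx] at hle
  omega

lemma FullyClosed.two_le_cutRankOn_pair_of_notMem_of_mem (hcard : 4 ≤ Fintype.card V)
    (hG : IsPrime G univ) (hA : FullyClosed G univ A) (hv : v ∈ A) (hx : x ∉ A) (hy : y ∈ A)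
    (hyv : y ≠ v) : 2 ≤ cutRankOn G {x, y} (univ \ {v, x, y}) := by
  by_contra! h
  set C := univ \ {v, x, y}
  set D := univ \ insert x A
  have hDC : D ⊆ C := by
    intro j hj
    simp only [D, C, mem_sdiff, mem_univ, mem_insert, mem_singleton, true_and, not_or] at hj ⊢
    exact ⟨fun h => hj.2 (h ▸ hv), hj.1, fun h => hj.2 (h ▸ hy)⟩
  rw [cutRankOn_eq_finrank_rowSpan, rowSpan, coe_pair, Set.image_pair] at h
  -- over `C`, the row of `x` is a multiple of the row of `y` unless the latter vanishes
  by_cases hy0 : adjRow G C y = 0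
  · by_cases hyx : G.Adj y x
    · have hxB : x ∈ univ \ A := mem_sdiff.mpr ⟨mem_univ x, hx⟩
      have := cutRankOn_add_one_le_of_restrictCols_eq_zero
        (sdiff_subset_sdiff (subset_refl univ) (subset_insert x A)) (adjRow_mem_rowSpan hy)
        (fun h0 => adjRow_eq_zero_iff.mp h0 x hxB hyx)
        (adjRow_eq_zero_iff.mpr fun j hj => adjRow_eq_zero_iff.mp hy0 j (hDC hj))
      have := hA.two_le_cutRankOn_sdiff_insert hx
      have := hA.cutRankOn_eq_two
      omega
    · -- `y` has no neighbour but `v`, so `{y, v}` would split `G`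
      have hrow : adjRow G (univ \ {y, v}) y = 0 := by
        refine adjRow_eq_zero_iff.mpr fun j hj => ?_
        by_cases hjx : j = x
        · exact hjx ▸ hyx
        · refine adjRow_eq_zero_iff.mp hy0 j ?_
          simp only [C, mem_sdiff, mem_univ, mem_insert, mem_singleton, true_and, not_or] at hj ⊢
          exact ⟨hj.2, hjx, hj.1⟩
      have := hG.two_le_cutRankOn_pair hcard hyv
      rw [cutRankOn_insert_of_mem_rowSpan (hrow ▸ zero_mem _)] at this
      have := cutRankOn_le_card_left (G := G) {v} (univ \ {y, v})
      rw [card_singleton] at this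
      omega
  · have hxy := Submodule.apply_mem_span_image_of_mem_span (restrictCols hDC)
      (mem_span_singleton_of_finrank_span_pair_le_one (Nat.le_of_lt_succ h) hy0)
    rw [Set.image_singleton, restrictCols_adjRow, restrictCols_adjRow] at hxy
    exact hA.adjRow_notMem_rowSpan hx
      (Submodule.span_le.mpr (Set.singleton_subset_iff.mpr (adjRow_mem_rowSpan hy)) hxy)

lemma FullyClosed.cutRank_sdiff_singleton_le_one (hcard : 4 ≤ Fintype.card V)
    (hG : IsPrime G univ) (hA : FullyClosed G univ A) (hv : v ∈ A) (hx : x ∉ A) (hy : y ∉ A)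
    (hxy : x ≠ y) (h : cutRankOn G {x, y} (univ \ {v, x, y}) ≤ 1) :
    cutRank G (univ \ {v}) (A \ {v}) ≤ 1 := by
  set C := univ \ {v, x, y}
  set Y := univ \ {x, y}
  have hCY : C ⊆ Y := sdiff_subset_sdiff (subset_refl univ) (subset_insert v {x, y})
  have hAY : A ⊆ Y := fun a ha => by
    simp only [Y, mem_sdiff, mem_univ, mem_insert, mem_singleton, true_and, not_or]
    exact ⟨fun h => hx (h ▸ ha), fun h => hy (h ▸ ha)⟩
  obtain ⟨z, hz, hz0, hzC⟩ := exists_restrictCols_eq_zero_of_cutRankOn_lt hCY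
    (h.trans_lt (hG.two_le_cutRankOn_pair hcard hxy))
  -- `z` combines the rows of `x` and `y` and vanishes off `v`; restricted to `A`, it lies in the
  -- row space of `univ \ A` and dies on `A \ {v}`
  have hzv : z ⟨v, hAY hv⟩ ≠ 0 := by
    obtain ⟨j, hj⟩ := Function.ne_iff.mp hz0
    obtain rfl : j = ⟨v, hAY hv⟩ := by
      refine Subtype.ext (by_contra fun hjv => hj (congrFun hzC ⟨j.1, ?_⟩))
      have hjY := j.2
      simp only [Y, C, mem_sdiff, mem_univ, mem_insert, mem_singleton, true_and, not_or]
        at hjY ⊢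
      exact ⟨hjv, hjY⟩
    exact hj
  have hz' : restrictCols hAY z ∈ rowSpan G (univ \ A) A := by
    have := Submodule.mem_map_of_mem (f := restrictCols hAY) hz
    rw [map_restrictCols_rowSpan] at this
    exact Submodule.span_mono
      (Set.image_mono (coe_subset.mpr (by simp [insert_subset_iff, hx, hy]))) this
  have hdrop := cutRankOn_add_one_le_of_restrictCols_eq_zero (sdiff_subset : A \ {v} ⊆ A) hz'
    (fun h0 => hzv (congrFun h0 ⟨v, hv⟩)) (funext fun j => congrFun hzC ⟨j.1, ?_⟩)
  · have := hA.cutRankOn_eq_two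
    rw [cutRank, sdiff_sdiff_sdiff_cancel_right (singleton_subset_iff.mpr hv), cutRankOn_comm]
    rw [cutRankOn_comm] at this
    omega
  · have hj := j.2
    simp only [C, mem_sdiff, mem_univ, mem_insert, mem_singleton, true_and, not_or] at hj ⊢
    exact ⟨hj.2, fun h => hx (h ▸ hj.1), fun h => hy (h ▸ hj.1)⟩

lemma FullyClosed.exists_pair_of_cutRank_pair_le_one (hcard : 4 ≤ Fintype.card V)
    (hG : IsPrime G univ) (hA : FullyClosed G univ A) (hv : v ∈ A)
    (hconn : RankConn G (univ \ {v}) 2 1) (hxy : x ≠ y) (hx : x ≠ v) (hy : y ≠ v)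
    (h : cutRank G (univ \ {v}) {x, y} ≤ 1) :
    ∃ X ⊆ A \ {v}, X.card = 2 ∧ cutRank G (univ \ {v}) X ≤ 1 := by
  have hC : cutRankOn G {x, y} (univ \ {v, x, y}) ≤ 1 := by
    rwa [cutRank, sdiff_sdiff_left, sup_eq_union, ← insert_eq] at h
  by_cases hxA : x ∈ A <;> by_cases hyA : y ∈ A
  · exact ⟨{x, y}, by simp [insert_subset_iff, hxA, hyA, hx, hy], card_pair hxy, h⟩
  · have := hA.two_le_cutRankOn_pair_of_notMem_of_mem hcard hG hv hyA hxA hx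
    rw [pair_comm] at this
    omega
  · have := hA.two_le_cutRankOn_pair_of_notMem_of_mem hcard hG hv hxA hyA hy
    omega
  · have hρ := hA.cutRank_sdiff_singleton_le_one hcard hG hv hxA hyA hxy hC
    refine ⟨A \ {v}, subset_rfl, ?_, hρ⟩
    have hsmall := hconn.card_le_two (sdiff_subset_sdiff (subset_univ A) subset_rfl) hρ
    rw [sdiff_sdiff_sdiff_cancel_right (singleton_subset_iff.mpr hv)] at hsmall
    have := hA.four_le_card_compl
    have hAcard : 2 < A.card := hA.2.2.1
    rw [card_sdiff_of_subset (singleton_subset_iff.mpr hv), card_singleton] at hsmall ⊢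
    omega

end FullyClosed

theorem fullyClosed_pick {G : SimpleGraph V} (hcard : 4 ≤ Fintype.card V)
    (hG : IsPrime G Finset.univ) {A : Finset V} (hA : FullyClosed G Finset.univ A)
    {v : V} (hv : v ∈ A) (hconn : RankConn G (Finset.univ \ {v}) 2 1)
    (hnp : ¬ IsPrime G (Finset.univ \ {v})) :
    ∃ X ⊆ A \ {v}, X.card = 2 ∧ cutRank G (Finset.univ \ {v}) X ≤ 1 := by
  obtain ⟨P, hPS, hP2, hPρ⟩ := hconn.exists_pair_cutRank_le_one_of_not_isPrime hnp
    (card_pos.mp (by rw [card_sdiff_of_subset (subset_univ _), card_univ, card_singleton]; omega))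
  obtain ⟨x, y, hxy, rfl⟩ := card_eq_two.mp hP2
  have hxS := hPS (mem_insert_self x {y})
  have hyS := hPS (mem_insert_of_mem (mem_singleton_self y))
  rw [mem_sdiff, mem_singleton] at hxS hyS
  exact hA.exists_pair_of_cutRank_pair_le_one hcard hG hv hconn hxy hxS.2 hyS.2 hPρ
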